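/- arXiv:2509.20325 — 2 statements merged into one kernel-verified Lean document; each statement's English description precedes it below -/
import Mathlib

section
/- Let F : ℝ → ℝ be a real-analytic function satisfying 2·F·F'' + (F')² − 1 − 3·F² = 0 with F(0) = 0 and F'(0) = 1, and suppose moreover that all even-order derivatives of F vanish at 0 (i.e., F is odd near 0). Then F(r) = sinh(r) for all r in a neighborhood of 0. -/
/-!
Multiplying the equation by `F'` shows that `F ((F')² - 1 - F²)` is a first integral; it vanishes
because `F 0 = 0`. Since `F'(0) = 1`, `F` has no other zero near `0`, so `(F')² = 1 + F²` there,
and as `F' > 0` near `0`, `F` solves `y' = √(1 + y²)`. This equation has a Lipschitz right-hand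
side and is also solved by `sinh`, so the two solutions agree near `0` by uniqueness.
-/

open Set Filter Topology

lemma lipschitzWith_sqrt_one_add_sq : LipschitzWith 1 (fun y : ℝ => √(1 + y ^ 2)) := by
  refine LipschitzWith.of_dist_le_mul fun a b => ?_
  rw [Real.dist_eq, Real.dist_eq, NNReal.coe_one, one_mul]
  have hsa : √(1 + a ^ 2) ^ 2 = 1 + a ^ 2 := Real.sq_sqrt (by positivity)
  have hsb : √(1 + b ^ 2) ^ 2 = 1 + b ^ 2 := Real.sq_sqrt (by positivity)
  -- Cauchy–Schwarz for the vectors `(1, a)` and `(1, b)`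
  have hprod : 1 + a * b ≤ √(1 + a ^ 2) * √(1 + b ^ 2) := by
    nlinarith [sq_nonneg (a - b), sq_nonneg (√(1 + a ^ 2) * √(1 + b ^ 2) - 1 - a * b),
      mul_nonneg (Real.sqrt_nonneg (1 + a ^ 2)) (Real.sqrt_nonneg (1 + b ^ 2))]
  exact sq_le_sq.mp (by nlinarith)

lemma hasDerivAt_sinh_eq_sqrt (r : ℝ) : HasDerivAt Real.sinh (√(1 + Real.sinh r ^ 2)) r := by
  rw [← Real.cosh_sq', Real.sqrt_sq (Real.cosh_pos r).le]
  exact Real.hasDerivAt_sinh r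

lemma eventuallyEq_sinh_of_hasDerivAt_sqrt {F : ℝ → ℝ}
    (hF : ∀ᶠ r in 𝓝 0, HasDerivAt F (√(1 + F r ^ 2)) r) (h0 : F 0 = 0) :
    F =ᶠ[𝓝 0] Real.sinh :=
  ODE_solution_unique_of_eventually (K := 1) (v := fun _ y => √(1 + y ^ 2)) (s := fun _ => univ)
    (.of_forall fun _ => lipschitzWith_sqrt_one_add_sq.lipschitzOnWith)
    (hF.mono fun _ h => ⟨h, mem_univ _⟩)
    (.of_forall fun r => ⟨hasDerivAt_sinh_eq_sqrt r, mem_univ _⟩)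
    (by simp [h0])

lemma hasDerivAt_mul_sq_sub_one_sub_sq {F F' : ℝ → ℝ} {F'' r : ℝ}
    (hF : HasDerivAt F (F' r) r) (hF' : HasDerivAt F' F'' r) :
    HasDerivAt (fun x => F x * (F' x ^ 2 - 1 - F x ^ 2))
      (F' r * (2 * F r * F'' + F' r ^ 2 - 1 - 3 * F r ^ 2)) r := by
  refine (hF.mul (((hF'.pow 2).sub_const 1).sub (hF.pow 2))).congr_deriv ?_
  simp only [Pi.sub_apply, Pi.pow_apply, Nat.cast_ofNat]
  ring

lemma mul_sq_deriv_sub_one_sub_sq_eq_zero {F : ℝ → ℝ}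
    (hF : Differentiable ℝ F) (hF' : Differentiable ℝ (deriv F))
    (hODE : ∀ r, 2 * F r * iteratedDeriv 2 F r + deriv F r ^ 2 - 1 - 3 * F r ^ 2 = 0)
    (h0 : F 0 = 0) (r : ℝ) :
    F r * (deriv F r ^ 2 - 1 - F r ^ 2) = 0 := by
  simp only [iteratedDeriv_succ, iteratedDeriv_zero] at hODE
  have hderiv (x : ℝ) :
      HasDerivAt (fun x => F x * (deriv F x ^ 2 - 1 - F x ^ 2)) 0 x := by
    have h := hasDerivAt_mul_sq_sub_one_sub_sq (hF x).hasDerivAt (hF' x).hasDerivAt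
    rwa [hODE, mul_zero] at h
  rw [is_const_of_deriv_eq_zero (fun x => (hderiv x).differentiableAt)
    (fun x => (hderiv x).deriv) r 0, h0, zero_mul]

theorem analytic_ode_solution_eq_sinh_general (F : ℝ → ℝ)
    (hF : ∀ r : ℝ, AnalyticAt ℝ F r)
    (hODE : ∀ r : ℝ,
      2 * F r * iteratedDeriv 2 F r + (deriv F r) ^ 2 - 1 - 3 * (F r) ^ 2 = 0)
    (h0 : F 0 = 0) (h1 : deriv F 0 = 1) :
    ∃ ε > 0, ∀ r : ℝ, |r| < ε → F r = Real.sinh r := by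
  have hF' (r : ℝ) : AnalyticAt ℝ (deriv F) r :=
    (show AnalyticOnNhd ℝ F univ from fun x _ => hF x).deriv r trivial
  have hdiff : Differentiable ℝ F := fun r => (hF r).differentiableAt
  have hfirstIntegral :=
    mul_sq_deriv_sub_one_sub_sq_eq_zero hdiff (fun r => (hF' r).differentiableAt) hODE h0
  have hne : ∀ᶠ r in 𝓝[≠] 0, F r ≠ 0 := by
    simpa only [h0] using (hdiff 0).hasDerivAt.eventually_ne (h1 ▸ one_ne_zero)
  have hsq : ∀ᶠ r in 𝓝 0, deriv F r ^ 2 = 1 + F r ^ 2 := by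
    refine (eventually_nhdsWithin_iff.mp hne).mono fun r hr => ?_
    rcases eq_or_ne r 0 with rfl | hr0
    · simp [h0, h1]
    · linarith [(mul_eq_zero.mp (hfirstIntegral r)).resolve_left (hr hr0)]
  have hpos : ∀ᶠ r in 𝓝 0, 0 < deriv F r :=
    continuousAt_const.eventually_lt (hF' 0).continuousAt (by rw [h1]; exact one_pos)
  have hsqrt : ∀ᶠ r in 𝓝 0, HasDerivAt F (√(1 + F r ^ 2)) r := by
    filter_upwards [hsq, hpos] with r hsq hpos
    rw [← hsq, Real.sqrt_sq hpos.le]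
    exact (hdiff r).hasDerivAt
  obtain ⟨ε, hε, hball⟩ :=
    Metric.eventually_nhds_iff.mp (eventuallyEq_sinh_of_hasDerivAt_sqrt hsqrt h0)
  exact ⟨ε, hε, fun r hr => hball (by rwa [Real.dist_0_eq_abs])⟩

/-- If `F` is real-analytic, satisfies `2FF'' + (F')² − 1 − 3F² = 0`, `F(0) = 0`, `F'(0) = 1`,
and all even-order derivatives of `F` vanish at `0`, then `F = sinh` near `0`. -/
theorem analytic_ode_solution_eq_sinh (F : ℝ → ℝ)
    (hF : ∀ r : ℝ, AnalyticAt ℝ F r)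
    (hODE : ∀ r : ℝ,
      2 * F r * iteratedDeriv 2 F r + (deriv F r) ^ 2 - 1 - 3 * (F r) ^ 2 = 0)
    (h0 : F 0 = 0) (h1 : deriv F 0 = 1)
    (heven : ∀ k : ℕ, iteratedDeriv (2 * k) F 0 = 0) :
    ∃ ε > 0, ∀ r : ℝ, |r| < ε → F r = Real.sinh r :=
  analytic_ode_solution_eq_sinh_general F hF hODE h0 h1
end

section
/- Let a : ℕ → ℝ satisfy a₁ = 1, a_{2m} = 0 for all m ≥ 1, a₃ = 1, and for every Q ≥ 2 the recursion ((2Q(n−1) + 2)/(2Q)!)·a_{2Q+1} + (n−1)·∑_{m=1}^{Q−1} a_{2m+1}/((2m+1)!·(2Q−1−2m)!) + ∑_{m=1}^{Q−1} a_{2m+1}/((2m)!·(2Q−2m)!) − n·(a_{2Q−1}/(2Q−1)! + ∑_{m=1}^{Q−1} a_{2m+1}/((2m+1)!·(2Q−2m−1)!)) = 0, where n ≥ 2 is a fixed integer. Then a_{2Q+1} = 1 for all Q ≥ 1. -/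
/-!
By strong induction, substituting `a_{2m+1} = 1` for `m < Q` turns the recursion at `Q` into
`c · (a_{2Q+1} - 1) = 0` with `c = (2Q(n-1) + 2) / (2Q)! > 0`. The substitution rests on
`∑_{m=1}^{Q-1} (1/((2m)! (2Q-2m)!) - 1/((2m+1)! (2Q-1-2m)!)) = (2Q-2)/(2Q)!`, which is
`(1 - 1)^{2Q} = 0` divided by `(2Q)!`, with its terms grouped in consecutive pairs and the
first two and the last one moved to the right-hand side.
-/

open Finset
open scoped Nat

lemma sum_range_two_mul {M : Type*} [AddCommMonoid M] (f : ℕ → M) (b : ℕ) :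
    ∑ k ∈ range (2 * b), f k = ∑ m ∈ range b, (f (2 * m) + f (2 * m + 1)) := by
  induction b with
  | zero => simp
  | succ b ih => rw [mul_add_one, sum_range_succ, sum_range_succ, sum_range_succ, ih, add_assoc]

lemma cast_factorial_two_mul {R : Type*} [Semiring R] {Q : ℕ} (hQ : Q ≠ 0) :
    ((2 * Q)! : R) = 2 * Q * (2 * Q - 1)! := by
  rw [← Nat.mul_factorial_pred (by omega : 2 * Q ≠ 0), Nat.cast_mul, Nat.cast_mul,
    Nat.cast_ofNat]

section Field

variable {K : Type*} [Field K] [CharZero K]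

lemma sum_range_neg_one_pow_div_factorial_mul_factorial {N : ℕ} (hN : N ≠ 0) :
    ∑ k ∈ range (N + 1), (-1 : K) ^ k / (k ! * (N - k)! : K) = 0 := by
  have hchoose : ∑ k ∈ range (N + 1), (-1 : K) ^ k * (N.choose k : K) = 0 := by
    exact_mod_cast Int.alternating_sum_range_choose_of_ne hN
  calc ∑ k ∈ range (N + 1), (-1 : K) ^ k / (k ! * (N - k)! : K)
      = (∑ k ∈ range (N + 1), (-1 : K) ^ k * (N.choose k : K)) / N ! := by
        rw [sum_div]
        refine sum_congr rfl fun k hk => ?_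
        rw [Nat.cast_choose K (Nat.lt_succ_iff.mp (mem_range.mp hk))]
        field_simp [N.factorial_ne_zero]
    _ = 0 := by rw [hchoose, zero_div]

lemma sum_Icc_inv_factorial_even_sub_odd {Q : ℕ} (hQ : Q ≠ 0) :
    ∑ m ∈ Icc 1 (Q - 1), (1 / ((2 * m)! * (2 * Q - 2 * m)! : K)
        - 1 / ((2 * m + 1)! * (2 * Q - 1 - 2 * m)! : K))
      = (2 * Q - 2) / (2 * Q)! := by
  set A : ℕ → K := fun k => (-1 : K) ^ k / (k ! * (2 * Q - k)! : K)
  have hpair : ∀ m, A (2 * m) + A (2 * m + 1) = 1 / ((2 * m)! * (2 * Q - 2 * m)! : K)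
      - 1 / ((2 * m + 1)! * (2 * Q - 1 - 2 * m)! : K) := fun m => by
    simp only [A, pow_succ, pow_mul, Nat.sub_add_eq, Nat.sub_right_comm]
    ring
  have hIcc : Ico 1 Q = Icc 1 (Q - 1) := by ext; simp only [mem_Ico, mem_Icc]; omega
  have h0 : ∑ k ∈ range (2 * Q + 1), A k = 0 :=
    sum_range_neg_one_pow_div_factorial_mul_factorial (by omega)
  rw [sum_range_succ, sum_range_two_mul, range_eq_Ico, sum_eq_sum_Ico_succ_bot (by omega), hIcc,
    sum_congr rfl fun m _ => hpair m] at h0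
  have hfirst : A (2 * 0) + A (2 * 0 + 1) = (1 - 2 * Q) / (2 * Q)! := by
    simp only [A, mul_zero, zero_add, pow_zero, pow_one, Nat.factorial_zero, Nat.factorial_one,
      Nat.cast_one, one_mul, tsub_zero, cast_factorial_two_mul hQ]
    field_simp
    ring
  have hlast : A (2 * Q) = 1 / (2 * Q)! := by simp [A, pow_mul]
  rw [hfirst, hlast] at h0
  linear_combination h0

end Field

noncomputable def taylorRecursion (n : ℕ) (a : ℕ → ℝ) (Q : ℕ) : ℝ :=
  ((2 * (Q : ℝ) * ((n : ℝ) - 1) + 2) / (Nat.factorial (2 * Q) : ℝ)) * a (2 * Q + 1)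
    + ((n : ℝ) - 1) * ∑ m ∈ Finset.Icc 1 (Q - 1),
        a (2 * m + 1)
          / ((Nat.factorial (2 * m + 1) : ℝ) * (Nat.factorial (2 * Q - 1 - 2 * m) : ℝ))
    + ∑ m ∈ Finset.Icc 1 (Q - 1),
        a (2 * m + 1)
          / ((Nat.factorial (2 * m) : ℝ) * (Nat.factorial (2 * Q - 2 * m) : ℝ))
    - (n : ℝ) * (a (2 * Q - 1) / (Nat.factorial (2 * Q - 1) : ℝ)
        + ∑ m ∈ Finset.Icc 1 (Q - 1),
            a (2 * m + 1)
              / ((Nat.factorial (2 * m + 1) : ℝ)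
                  * (Nat.factorial (2 * Q - 2 * m - 1) : ℝ)))

lemma taylorRecursion_eq_of_eq_one {n Q : ℕ} {a : ℕ → ℝ} (hQ : 2 ≤ Q)
    (ha : ∀ m ∈ Icc 1 (Q - 1), a (2 * m + 1) = 1) :
    taylorRecursion n a Q = (2 * Q * (n - 1) + 2) / (2 * Q)! * (a (2 * Q + 1) - 1) := by
  have hprev : a (2 * Q - 1) = 1 := by
    rw [show 2 * Q - 1 = 2 * (Q - 1) + 1 by omega]
    exact ha _ (mem_Icc.2 ⟨by omega, le_rfl⟩)
  have hsub : ∀ m, 2 * Q - 2 * m - 1 = 2 * Q - 1 - 2 * m := fun m => Nat.sub_right_comm ..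
  have hsum : ∀ f : ℕ → ℝ, ∑ m ∈ Icc 1 (Q - 1), a (2 * m + 1) / f m
      = ∑ m ∈ Icc 1 (Q - 1), 1 / f m := fun f => sum_congr rfl fun m hm => by rw [ha m hm]
  have hkey := sum_Icc_inv_factorial_even_sub_odd (K := ℝ) (Q := Q) (by omega)
  rw [sum_sub_distrib] at hkey
  unfold taylorRecursion
  simp only [hprev, hsub, hsum]
  rw [cast_factorial_two_mul (by omega)] at hkey ⊢
  field_simp at hkey ⊢
  linear_combination hkey

theorem taylor_coefficients_eq_one_general (n : ℕ) (hn : 2 ≤ n) (a : ℕ → ℝ)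
    (h3 : a 3 = 1)
    (hrec : ∀ Q : ℕ, 2 ≤ Q →
      ((2 * (Q : ℝ) * ((n : ℝ) - 1) + 2) / (Nat.factorial (2 * Q) : ℝ)) * a (2 * Q + 1)
        + ((n : ℝ) - 1) * ∑ m ∈ Finset.Icc 1 (Q - 1),
            a (2 * m + 1)
              / ((Nat.factorial (2 * m + 1) : ℝ) * (Nat.factorial (2 * Q - 1 - 2 * m) : ℝ))
        + ∑ m ∈ Finset.Icc 1 (Q - 1),
            a (2 * m + 1)
              / ((Nat.factorial (2 * m) : ℝ) * (Nat.factorial (2 * Q - 2 * m) : ℝ))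
        - (n : ℝ) * (a (2 * Q - 1) / (Nat.factorial (2 * Q - 1) : ℝ)
            + ∑ m ∈ Finset.Icc 1 (Q - 1),
                a (2 * m + 1)
                  / ((Nat.factorial (2 * m + 1) : ℝ)
                      * (Nat.factorial (2 * Q - 2 * m - 1) : ℝ))) = 0) :
    ∀ Q : ℕ, 1 ≤ Q → a (2 * Q + 1) = 1 := by
  intro Q
  induction Q using Nat.strong_induction_on with
  | _ Q ih =>
  intro hQ
  obtain rfl | hQ2 : Q = 1 ∨ 2 ≤ Q := by omega
  · exact h3
  have hcoeff : (2 * Q * (n - 1) + 2 : ℝ) / (2 * Q)! ≠ 0 := by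
    have hn' : (2 : ℝ) ≤ n := mod_cast hn
    have hpos : (0 : ℝ) < 2 * Q * (n - 1) + 2 := by nlinarith [Q.cast_nonneg (α := ℝ)]
    exact (div_pos hpos (by positivity)).ne'
  have h : taylorRecursion n a Q = 0 := hrec Q hQ2
  rw [taylorRecursion_eq_of_eq_one hQ2 fun m hm => ih m (by grind) (mem_Icc.1 hm).1] at h
  linarith [(mul_eq_zero.1 h).resolve_left hcoeff]

/-- Taylor-coefficient recursion for the reduced Einstein ODE: if `a₁ = 1`, all even
coefficients vanish, `a₃ = 1`, and the recursion obtained by equating coefficients of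
`r^{2Q}` in `(n−1)FF'' + (F')² − 1 − nF² = 0` holds for all `Q ≥ 2`, then `a_{2Q+1} = 1`
for all `Q ≥ 1`. -/
theorem taylor_coefficients_eq_one (n : ℕ) (hn : 2 ≤ n) (a : ℕ → ℝ)
    (h1 : a 1 = 1) (heven : ∀ m : ℕ, 1 ≤ m → a (2 * m) = 0) (h3 : a 3 = 1)
    (hrec : ∀ Q : ℕ, 2 ≤ Q →
      ((2 * (Q : ℝ) * ((n : ℝ) - 1) + 2) / (Nat.factorial (2 * Q) : ℝ)) * a (2 * Q + 1)
        + ((n : ℝ) - 1) * ∑ m ∈ Finset.Icc 1 (Q - 1),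
            a (2 * m + 1)
              / ((Nat.factorial (2 * m + 1) : ℝ) * (Nat.factorial (2 * Q - 1 - 2 * m) : ℝ))
        + ∑ m ∈ Finset.Icc 1 (Q - 1),
            a (2 * m + 1)
              / ((Nat.factorial (2 * m) : ℝ) * (Nat.factorial (2 * Q - 2 * m) : ℝ))
        - (n : ℝ) * (a (2 * Q - 1) / (Nat.factorial (2 * Q - 1) : ℝ)
            + ∑ m ∈ Finset.Icc 1 (Q - 1),
                a (2 * m + 1)
                  / ((Nat.factorial (2 * m + 1) : ℝ)
                      * (Nat.factorial (2 * Q - 2 * m - 1) : ℝ))) = 0) :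
    ∀ Q : ℕ, 1 ≤ Q → a (2 * Q + 1) = 1 :=
  taylor_coefficients_eq_one_general n hn a h3 hrec
end
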